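/- (Transitions between contractions.) Let (δ, Δ) be galactic space data on a type F, and let α β : K be limited with 0 < β ≤ α. Suppose g_α : F → F_α is an α-contraction onto galactic space data (δ_α, Δ_α) on F_α, and g_β : F → F_β is a β-contraction onto galactic space data (δ_β, Δ_β) on F_β. Then there exists a unique map h : F_α → F_β such that g_β = h ∘ g_α; moreover h is a (β/α)-contraction from (F_α, δ_α, Δ_α) onto (F_β, δ_β, Δ_β) (note 0 < β/α ≤ 1, so β/α is limited). -/

import Mathlib

open ENNReal

variable {K : Type*} [Field K] [LinearOrder K] [IsStrictOrderedRing K]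

/-- `s : K` is infinitesimal: `|s| < f r` for every real `r > 0`. -/
def IsInfinitesimal (f : ℝ →+* K) (s : K) : Prop := ∀ r : ℝ, 0 < r → |s| < f r

/-- `s : K` is limited: `|s| ≤ f r` for some real `r > 0`. -/
def IsLimited (f : ℝ →+* K) (s : K) : Prop := ∃ r : ℝ, 0 < r ∧ |s| ≤ f r

/-- Galactic space data on a type `F`: an extended distance `δ` together with a
galaxy-valued distance `Δ` between metric components, encoded on points. -/
structure GalacticData (K : Type*) [Field K] [LinearOrder K] [IsStrictOrderedRing K] (f : ℝ →+* K) (F : Type*) where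
  δ : F → F → ℝ≥0∞
  Δ : F → F → K
  δ_self : ∀ x, δ x x = 0
  δ_pos : ∀ x y, x ≠ y → 0 < δ x y
  δ_symm : ∀ x y, δ x y = δ y x
  δ_triangle : ∀ x y z, δ x z ≤ δ x y + δ y z
  Δ_congr : ∀ x x' y y', δ x x' ≠ ⊤ → δ y y' ≠ ⊤ → IsLimited f (Δ x y - Δ x' y')
  Δ_symm : ∀ x y, IsLimited f (Δ x y - Δ y x)
  Δ_limited_iff : ∀ x y, IsLimited f (Δ x y) ↔ δ x y ≠ ⊤
  Δ_pos : ∀ x y, δ x y = ⊤ → 0 < Δ x y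
  Δ_triangle : ∀ x y z, Δ x z ≤ Δ x y + Δ y z ∨ IsLimited f (Δ x z - (Δ x y + Δ y z))

/-- `g : F → F'` is a `γ`-contraction between galactic space data. -/
def IsContraction (f : ℝ →+* K) {F F' : Type*}
    (G : GalacticData K f F) (G' : GalacticData K f F') (γ : K) (g : F → F') : Prop :=
  Function.Surjective g ∧
  ∀ x y : F,
    (G.δ x y ≠ ⊤ →
      G'.δ (g x) (g y) ≠ ⊤ ∧
      IsInfinitesimal f (γ * f (G.δ x y).toReal - f (G'.δ (g x) (g y)).toReal)) ∧
    (G.δ x y = ⊤ →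
      (G'.δ (g x) (g y) = ⊤ ↔ ¬ IsLimited f (γ * G.Δ x y)) ∧
      (IsLimited f (γ * G.Δ x y) →
        IsInfinitesimal f (γ * G.Δ x y - f (G'.δ (g x) (g y)).toReal))) ∧
    IsLimited f (G'.Δ (g x) (g y) - γ * G.Δ x y)

/-! Write `γ = β / α`, so that `β = γ * α` with `0 < γ ≤ 1`. Both contractions
approximate the same `K`-valued distance of `F`, scaled by `α` resp. `β`, up to infinitesimals
(on finite distances) and up to limited errors (on `Δ`). Multiplying the `α`-approximation by the
limited `γ` gives the `β`-approximation up to the same kind of errors, which is exactly the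
`γ`-contraction property of `h`. Points glued by `g_α` are at infinitesimal, hence zero,
`δ_β`-distance after `g_β`, so `h` is well defined. The one delicate case is a pair at infinite
`δ_α`-distance whose `γ * Δ_α` is limited: there `α * Δ` is unlimited while `β * Δ` is limited,
which forces `γ` to be infinitesimal, so the limited error of the `Δ`-approximation becomes
infinitesimal after scaling by `γ`. -/

section Infinitesimals

variable {f : ℝ →+* K}

lemma RingHom.map_real_nonneg (f : ℝ →+* K) {r : ℝ} (hr : 0 ≤ r) : 0 ≤ f r := by
  rw [← Real.sq_sqrt hr, map_pow]
  positivity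

lemma RingHom.map_real_pos (f : ℝ →+* K) {r : ℝ} (hr : 0 < r) : 0 < f r :=
  (f.map_real_nonneg hr.le).lt_of_ne ((map_ne_zero f).2 hr.ne').symm

lemma isLimited_map_real (f : ℝ →+* K) {r : ℝ} (hr : 0 ≤ r) : IsLimited f (f r) :=
  ⟨r + 1, by linarith, by
    rw [abs_of_nonneg (f.map_real_nonneg hr), map_add, map_one]
    exact le_add_of_nonneg_right zero_le_one⟩

omit [IsStrictOrderedRing K] in
lemma isLimited_of_abs_le_one {s : K} (hs : |s| ≤ 1) : IsLimited f s :=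
  ⟨1, one_pos, by rwa [map_one]⟩

lemma eq_zero_of_isInfinitesimal_map_real {r : ℝ} (hr : 0 ≤ r)
    (h : IsInfinitesimal f (f r)) : r = 0 := by
  by_contra hr0
  have hlt := h r (hr.lt_of_ne' hr0)
  rw [abs_of_nonneg (f.map_real_nonneg hr)] at hlt
  exact hlt.false

namespace IsInfinitesimal

omit [IsStrictOrderedRing K] in
lemma isLimited {s : K} (hs : IsInfinitesimal f s) : IsLimited f s :=
  ⟨1, one_pos, (hs 1 one_pos).le⟩

omit [IsStrictOrderedRing K] in
lemma neg {s : K} (hs : IsInfinitesimal f s) : IsInfinitesimal f (-s) := by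
  simpa only [IsInfinitesimal, abs_neg] using hs

lemma add {s t : K} (hs : IsInfinitesimal f s) (ht : IsInfinitesimal f t) :
    IsInfinitesimal f (s + t) := fun r hr =>
  calc |s + t| ≤ |s| + |t| := abs_add_le s t
    _ < f (r / 2) + f (r / 2) := add_lt_add (hs _ (half_pos hr)) (ht _ (half_pos hr))
    _ = f r := by rw [← map_add, add_halves]

lemma sub {s t : K} (hs : IsInfinitesimal f s) (ht : IsInfinitesimal f t) :
    IsInfinitesimal f (s - t) := by
  simpa only [sub_eq_add_neg] using hs.add ht.neg

end IsInfinitesimal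

namespace IsLimited

omit [IsStrictOrderedRing K] in
lemma neg {s : K} (hs : IsLimited f s) : IsLimited f (-s) := by
  simpa only [IsLimited, abs_neg] using hs

lemma add {s t : K} (hs : IsLimited f s) (ht : IsLimited f t) : IsLimited f (s + t) := by
  obtain ⟨r, hr, hs⟩ := hs
  obtain ⟨r', hr', ht⟩ := ht
  exact ⟨r + r', add_pos hr hr', (abs_add_le s t).trans (by rw [map_add]; exact add_le_add hs ht)⟩

lemma sub {s t : K} (hs : IsLimited f s) (ht : IsLimited f t) : IsLimited f (s - t) := by
  simpa only [sub_eq_add_neg] using hs.add ht.neg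

lemma mul {s t : K} (hs : IsLimited f s) (ht : IsLimited f t) : IsLimited f (s * t) := by
  obtain ⟨r, hr, hs⟩ := hs
  obtain ⟨r', hr', ht⟩ := ht
  refine ⟨r * r', mul_pos hr hr', ?_⟩
  rw [abs_mul, map_mul]
  exact mul_le_mul hs ht (abs_nonneg t) (f.map_real_nonneg hr.le)

lemma mul_isInfinitesimal {s t : K} (hs : IsLimited f s) (ht : IsInfinitesimal f t) :
    IsInfinitesimal f (s * t) := by
  obtain ⟨r, hr, hs⟩ := hs
  intro ε hε
  calc |s * t| = |s| * |t| := abs_mul s t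
    _ ≤ f r * |t| := mul_le_mul_of_nonneg_right hs (abs_nonneg t)
    _ < f r * f (ε / r) := mul_lt_mul_of_pos_left (ht _ (div_pos hε hr)) (f.map_real_pos hr)
    _ = f ε := by rw [← map_mul, mul_div_cancel₀ ε hr.ne']

end IsLimited

lemma IsInfinitesimal.mul_isLimited {s t : K} (hs : IsInfinitesimal f s) (ht : IsLimited f t) :
    IsInfinitesimal f (s * t) :=
  mul_comm t s ▸ ht.mul_isInfinitesimal hs

lemma isInfinitesimal_of_isLimited_mul {γ u : K} (hu : ¬ IsLimited f u)
    (hγu : IsLimited f (γ * u)) : IsInfinitesimal f γ := by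
  obtain ⟨r, hr, hle⟩ := hγu
  intro ε hε
  have hfε : 0 < f (r / ε) := f.map_real_pos (div_pos hr hε)
  have hu_large : f (r / ε) < |u| := not_le.1 fun h => hu ⟨r / ε, div_pos hr hε, h⟩
  have hu_pos : 0 < |u| := hfε.trans hu_large
  calc |γ| ≤ f r / |u| := by rwa [le_div_iff₀ hu_pos, ← abs_mul]
    _ < f r / f (r / ε) := div_lt_div_of_pos_left (f.map_real_pos hr) hfε hu_large
    _ = f ε := by rw [div_eq_iff hfε.ne', ← map_mul, mul_div_cancel₀ r hε.ne']

end Infinitesimals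

namespace GalacticData

variable {f : ℝ →+* K} {F : Type*}

noncomputable def galDist (G : GalacticData K f F) (x y : F) : K :=
  if G.δ x y = ⊤ then G.Δ x y else f (G.δ x y).toReal

end GalacticData

namespace IsContraction

variable {f : ℝ →+* K} {F F' F'' : Type*} {G : GalacticData K f F} {G' : GalacticData K f F'}
  {G'' : GalacticData K f F''} {γ : K} {g : F → F'}

lemma ne_top_of_isLimited (hg : IsContraction f G G' γ g) {x y : F}
    (h : IsLimited f (γ * G.galDist x y)) : G'.δ (g x) (g y) ≠ ⊤ := by
  by_cases hxy : G.δ x y = ⊤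
  · rw [GalacticData.galDist, if_pos hxy] at h
    exact fun htop => ((hg.2 x y).2.1 hxy).1.1 htop h
  · exact ((hg.2 x y).1 hxy).1

lemma isInfinitesimal_galDist_sub (hg : IsContraction f G G' γ g) {x y : F}
    (h : G'.δ (g x) (g y) ≠ ⊤) :
    IsInfinitesimal f (γ * G.galDist x y - f (G'.δ (g x) (g y)).toReal) := by
  by_cases hxy : G.δ x y = ⊤
  · obtain ⟨htop_iff, happrox⟩ := (hg.2 x y).2.1 hxy
    rw [GalacticData.galDist, if_pos hxy]
    exact happrox (not_not.1 (mt htop_iff.2 h))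
  · rw [GalacticData.galDist, if_neg hxy]
    exact ((hg.2 x y).1 hxy).2

lemma δ_eq_top_of_δ_eq_top (hg : IsContraction f G G' γ g) {x y : F}
    (h : G'.δ (g x) (g y) = ⊤) : G.δ x y = ⊤ :=
  not_not.1 fun hxy => ((hg.2 x y).1 hxy).1 h

variable {α : K} {gα : F → F'} {gβ : F → F''}

lemma transition_finite (hgα : IsContraction f G G' α gα)
    (hgβ : IsContraction f G G'' (γ * α) gβ) (hγ : IsLimited f γ) {x y : F}
    (hxy : G'.δ (gα x) (gα y) ≠ ⊤) :
    G''.δ (gβ x) (gβ y) ≠ ⊤ ∧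
      IsInfinitesimal f (γ * f (G'.δ (gα x) (gα y)).toReal - f (G''.δ (gβ x) (gβ y)).toReal) := by
  set dα := f (G'.δ (gα x) (gα y)).toReal
  have hα := hgα.isInfinitesimal_galDist_sub hxy
  have hβ_lim : IsLimited f (γ * α * G.galDist x y) := by
    have hdecomp : γ * α * G.galDist x y = γ * (α * G.galDist x y - dα) + γ * dα := by ring
    rw [hdecomp]
    exact (hγ.mul hα.isLimited).add (hγ.mul (isLimited_map_real f toReal_nonneg))
  have hβ_fin := hgβ.ne_top_of_isLimited hβ_lim
  refine ⟨hβ_fin, ?_⟩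
  have hdecomp : γ * dα - f (G''.δ (gβ x) (gβ y)).toReal =
      (γ * α * G.galDist x y - f (G''.δ (gβ x) (gβ y)).toReal) -
        γ * (α * G.galDist x y - dα) := by ring
  rw [hdecomp]
  exact (hgβ.isInfinitesimal_galDist_sub hβ_fin).sub (hγ.mul_isInfinitesimal hα)

lemma factorsThrough (hgα : IsContraction f G G' α gα)
    (hgβ : IsContraction f G G'' (γ * α) gβ) (hγ : IsLimited f γ) :
    Function.FactorsThrough gβ gα := by
  intro x y hxy
  have hzero : G'.δ (gα x) (gα y) = 0 := by rw [hxy, G'.δ_self]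
  obtain ⟨hβ_fin, hinf⟩ := hgα.transition_finite hgβ hγ (hzero ▸ zero_ne_top)
  rw [hzero, toReal_zero, map_zero, mul_zero, zero_sub] at hinf
  have hreal := eq_zero_of_isInfinitesimal_map_real toReal_nonneg (neg_neg (f _) ▸ hinf.neg)
  have hβ_zero := ((toReal_eq_zero_iff _).1 hreal).resolve_right hβ_fin
  by_contra hne
  exact (G''.δ_pos _ _ hne).ne' hβ_zero

lemma transition_infinite (hgα : IsContraction f G G' α gα)
    (hgβ : IsContraction f G G'' (γ * α) gβ) (hγ : IsLimited f γ) {x y : F}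
    (hxy : G'.δ (gα x) (gα y) = ⊤) :
    (G''.δ (gβ x) (gβ y) = ⊤ ↔ ¬ IsLimited f (γ * G'.Δ (gα x) (gα y))) ∧
      (IsLimited f (γ * G'.Δ (gα x) (gα y)) →
        IsInfinitesimal f (γ * G'.Δ (gα x) (gα y) - f (G''.δ (gβ x) (gβ y)).toReal)) := by
  have hxy₀ := hgα.δ_eq_top_of_δ_eq_top hxy
  set err := G'.Δ (gα x) (gα y) - α * G.Δ x y
  have herr : IsLimited f err := (hgα.2 x y).2.2
  have hdecomp : γ * G'.Δ (gα x) (gα y) = γ * α * G.Δ x y + γ * err := by ring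
  have hlim_iff : IsLimited f (γ * G'.Δ (gα x) (gα y)) ↔ IsLimited f (γ * α * G.Δ x y) := by
    rw [hdecomp]
    exact ⟨fun h => add_sub_cancel_right (γ * α * G.Δ x y) (γ * err) ▸ h.sub (hγ.mul herr),
      fun h => h.add (hγ.mul herr)⟩
  obtain ⟨hβ_top_iff, hβ_approx⟩ := (hgβ.2 x y).2.1 hxy₀
  refine ⟨hβ_top_iff.trans (not_congr hlim_iff.symm), fun hlim => ?_⟩
  have hβ_lim := hlim_iff.1 hlim
  have hγ_inf : IsInfinitesimal f γ :=
    isInfinitesimal_of_isLimited_mul (((hgα.2 x y).2.1 hxy₀).1.1 hxy) (mul_assoc γ α _ ▸ hβ_lim)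
  rw [hdecomp, add_sub_right_comm]
  exact (hβ_approx hβ_lim).add (hγ_inf.mul_isLimited herr)

lemma Δ_transition (hgα : IsContraction f G G' α gα)
    (hgβ : IsContraction f G G'' (γ * α) gβ) (hγ : IsLimited f γ) (x y : F) :
    IsLimited f (G''.Δ (gβ x) (gβ y) - γ * G'.Δ (gα x) (gα y)) := by
  have hdecomp : G''.Δ (gβ x) (gβ y) - γ * G'.Δ (gα x) (gα y) =
      (G''.Δ (gβ x) (gβ y) - γ * α * G.Δ x y) -
        γ * (G'.Δ (gα x) (gα y) - α * G.Δ x y) := by ring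
  rw [hdecomp]
  exact (hgβ.2 x y).2.2.sub (hγ.mul (hgα.2 x y).2.2)

lemma of_comp (hgα : IsContraction f G G' α gα)
    (hgβ : IsContraction f G G'' (γ * α) gβ) (hγ : IsLimited f γ) {h : F' → F''}
    (hh : gβ = h ∘ gα) : IsContraction f G' G'' γ h := by
  subst hh
  refine ⟨Function.Surjective.of_comp hgβ.1, fun a b => ?_⟩
  obtain ⟨x, rfl⟩ := hgα.1 a
  obtain ⟨y, rfl⟩ := hgα.1 b
  exact ⟨hgα.transition_finite hgβ hγ, hgα.transition_infinite hgβ hγ,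
    hgα.Δ_transition hgβ hγ x y⟩

end IsContraction

lemma Function.Surjective.existsUnique_comp_eq {α β γ : Sort*} {g : α → β} {k : α → γ}
    (hg : Function.Surjective g) (hk : Function.FactorsThrough k g) :
    ∃! h : β → γ, k = h ∘ g :=
  ⟨k ∘ Function.surjInv hg, funext fun x => hk (Function.surjInv_eq hg (g x)).symm,
    fun _ hh => hg.injective_comp_right (hh.symm.trans (funext fun x =>
      hk (Function.surjInv_eq hg (g x)).symm))⟩

theorem transition_between_contractions_general (f : ℝ →+* K)
    {F Fα Fβ : Type*} (G : GalacticData K f F)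
    (Gα : GalacticData K f Fα) (Gβ : GalacticData K f Fβ)
    (α β : K) (hβpos : 0 < β) (hβα : β ≤ α)
    (gα : F → Fα) (gβ : F → Fβ)
    (hgα : IsContraction f G Gα α gα) (hgβ : IsContraction f G Gβ β gβ) :
    (∃! h : Fα → Fβ, gβ = h ∘ gα) ∧
    (∀ h : Fα → Fβ, gβ = h ∘ gα → IsContraction f Gα Gβ (β / α) h) := by
  have hαpos : 0 < α := hβpos.trans_le hβα
  have hγ : IsLimited f (β / α) := isLimited_of_abs_le_one <| by
    rw [abs_of_pos (div_pos hβpos hαpos)]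
    exact div_le_one_of_le₀ hβα hαpos.le
  rw [← div_mul_cancel₀ β hαpos.ne'] at hgβ
  exact ⟨hgα.1.existsUnique_comp_eq (hgα.factorsThrough hgβ hγ),
    fun _ hh => hgα.of_comp hgβ hγ hh⟩

/-- Transitions between contractions: if `g_α` is an `α`-contraction and `g_β` a
`β`-contraction of the same galactic space, with `0 < β ≤ α`, then `g_β` factors
uniquely through `g_α`, and the factoring map is a `β/α`-contraction. -/
theorem transition_between_contractions (f : ℝ →+* K) (hf : ¬ Function.Surjective f)
    {F Fα Fβ : Type*} (G : GalacticData K f F)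
    (Gα : GalacticData K f Fα) (Gβ : GalacticData K f Fβ)
    (α β : K) (hαlim : IsLimited f α) (hβpos : 0 < β) (hβα : β ≤ α)
    (gα : F → Fα) (gβ : F → Fβ)
    (hgα : IsContraction f G Gα α gα) (hgβ : IsContraction f G Gβ β gβ) :
    (∃! h : Fα → Fβ, gβ = h ∘ gα) ∧
    (∀ h : Fα → Fβ, gβ = h ∘ gα → IsContraction f Gα Gβ (β / α) h) :=
  transition_between_contractions_general f G Gα Gβ α β hβpos hβα gα gβ hgα hgβ
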